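/- Let d ≥ 1 and A ⊆ ℤ^d. Then the limits lim_{i→∞} d̄(A_{[i]}), lim_{i→∞} d̄(A^{[i]}), and lim_{i→∞} d̄(A + [-i,i]^d) all exist and are equal. -/

import Mathlib

open Filter Pointwise

/-- The `d`-dimensional cube `[-m, m]^d` in `ℤ^d`. -/
def cube (d m : ℕ) : Set (Fin d → ℤ) :=
  Set.Icc (fun _ => -(m : ℤ)) (fun _ => (m : ℤ))

/-- The `n`-block set `A_{[n]} = {x : (n·x + [0, n-1]^d) ∩ A ≠ ∅}`. -/
def blockSet (d : ℕ) (A : Set (Fin d → ℤ)) (n : ℕ) : Set (Fin d → ℤ) :=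
  {x | ∃ t ∈ Set.Icc (0 : Fin d → ℤ) (fun _ => (n : ℤ) - 1), (n : ℤ) • x + t ∈ A}

/-- The set `A^{[n]} = n·A_{[n]} + [0, n-1]^d`. -/
def superBlockSet (d : ℕ) (A : Set (Fin d → ℤ)) (n : ℕ) : Set (Fin d → ℤ) :=
  {w | ∃ x ∈ blockSet d A n,
    ∃ t ∈ Set.Icc (0 : Fin d → ℤ) (fun _ => (n : ℤ) - 1), w = (n : ℤ) • x + t}

/-- Upper asymptotic density of `A ⊆ ℤ^d`. -/
noncomputable def upperDensity (d : ℕ) (A : Set (Fin d → ℤ)) : ℝ :=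
  limsup (fun n : ℕ => (Set.ncard (A ∩ cube d n) : ℝ) / (2 * (n : ℝ) + 1) ^ d) atTop

/-!
Write `f i = d̄(A + [-i, i]^d)`, `b n = d̄(A_{[n]})` and `s n = d̄(A^{[n]})`. The sequence `f` is
monotone and bounded, so it converges to `L = sup f`. Since `A^{[n]} ⊆ A + [-(n-1), n-1]^d`, we have
`s n ≤ L`; blowing `A_{[n]}` up by the factor `n` loses no density, so `b n ≤ s n`. Conversely every
point of `A + [-i, i]^d` lies in `n x + [-i, n-1+i]^d` for some `x ∈ A_{[n]}`, and counting lattice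
points in cubes gives `f i ≤ ((n + 2i)/n)^d b n`. Letting `n → ∞` for each fixed `i` squeezes both
`b n` and `s n` to `L`.
-/

open Set

lemma limsup_le_mul_limsup_comp {u v r : ℕ → ℝ} {φ : ℕ → ℕ} {c M : ℝ}
    (hu : ∀ m, 0 ≤ u m) (hv : ∀ k, 0 ≤ v k) (hvM : ∀ k, v k ≤ M) (hr : ∀ m, 0 ≤ r m)
    (hrc : Tendsto r atTop (nhds c)) (hφ : Tendsto φ atTop atTop)
    (h : ∀ m, u m ≤ r m * v (φ m)) :
    limsup u atTop ≤ c * limsup v atTop := by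
  have hvφ : IsBoundedUnder (· ≤ ·) atTop (v ∘ φ) := isBoundedUnder_of ⟨M, fun m => hvM (φ m)⟩
  have hr_freq : ∃ᶠ m in atTop, 0 ≤ r m := Frequently.of_forall hr
  calc limsup u atTop ≤ limsup (r * (v ∘ φ)) atTop :=
        limsup_le_limsup (Eventually.of_forall h) (isCoboundedUnder_le_of_le atTop hu)
          (isBoundedUnder_le_mul_of_nonneg hr_freq hrc.isBoundedUnder_le
            (Eventually.of_forall fun m => hv (φ m)) hvφ)
    _ ≤ limsup r atTop * limsup (v ∘ φ) atTop :=
        limsup_mul_le hr_freq hrc.isBoundedUnder_le (Eventually.of_forall fun m => hv (φ m)) hvφ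
    _ ≤ c * limsup v atTop := by
        rw [hrc.limsup_eq]
        exact mul_le_mul_of_nonneg_left
          (hφ.limsup_comp_le_limsup (isCoboundedUnder_le_of_le _ hv)
            (isBoundedUnder_of ⟨M, hvM⟩))
          (ge_of_tendsto' hrc hr)

lemma tendsto_of_le_of_forall_le_mul {f g : ℕ → ℝ} {c : ℕ → ℕ → ℝ} {L : ℝ}
    (hf : Tendsto f atTop (nhds L)) (hgL : ∀ᶠ n in atTop, g n ≤ L)
    (hc : ∀ i, Tendsto (c i) atTop (nhds 1)) (hfg : ∀ i, ∀ᶠ n in atTop, f i ≤ c i n * g n) :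
    Tendsto g atTop (nhds L) := by
  refine tendsto_order.2 ⟨fun a ha => ?_, fun a ha => hgL.mono fun n hn => hn.trans_lt ha⟩
  obtain ⟨i, hi⟩ := (hf.eventually (lt_mem_nhds ha)).exists
  have hquot : Tendsto (fun n => f i / c i n) atTop (nhds (f i)) := by
    have := (tendsto_const_nhds (x := f i)).div (hc i) one_ne_zero
    rwa [div_one] at this
  filter_upwards [hquot.eventually (lt_mem_nhds hi), (hc i).eventually (lt_mem_nhds one_pos),
    hfg i] with n hlt hpos hle
  exact hlt.trans_le ((div_le_iff₀' hpos).2 hle)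

lemma tendsto_add_div_pow_nhds_one (d : ℕ) (x : ℝ) :
    Tendsto (fun n : ℕ => (((n : ℝ) + x) / n) ^ d) atTop (nhds 1) := by
  have hsum : Tendsto (fun n : ℕ => 1 + x / n) atTop (nhds 1) := by
    simpa using tendsto_const_nhds.add (tendsto_const_div_atTop_nhds_zero_nat x)
  have heq : (fun n : ℕ => 1 + x / n) =ᶠ[atTop] fun n : ℕ => ((n : ℝ) + x) / n := by
    filter_upwards [eventually_ne_atTop 0] with n hn
    rw [add_div, div_self (Nat.cast_ne_zero.2 hn)]
  simpa using (hsum.congr' heq).pow d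

-- For a set `B`, `(n : ℤ) • B` is the `n`-fold sumset `B + ⋯ + B`; dilates are written as images.
section Counting

variable {d : ℕ}

lemma ncard_Icc_const (lo hi : ℤ) :
    (Icc (fun _ => lo) (fun _ => hi) : Set (Fin d → ℤ)).ncard = (hi + 1 - lo).toNat ^ d := by
  rw [← Finset.coe_Icc, ncard_coe_finset, Pi.card_Icc]
  simp [Int.card_Icc]

lemma mem_Icc_const {lo hi : ℤ} {w : Fin d → ℤ} :
    w ∈ Icc (fun _ => lo) (fun _ => hi) ↔ ∀ j, lo ≤ w j ∧ w j ≤ hi := by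
  simp [Pi.le_def, forall_and]

lemma cube_finite (m : ℕ) : (cube d m).Finite := finite_Icc _ _

lemma cube_mono {i j : ℕ} (h : i ≤ j) : cube d i ⊆ cube d j :=
  Icc_subset_Icc (fun _ => by simp [h]) (fun _ => by simp [h])

lemma abs_le_ediv_add_one_of_mul_add_mem {n m i x t : ℤ} (hn : 0 < n)
    (hw : -m ≤ n * x + t ∧ n * x + t ≤ m) (ht : -i ≤ t ∧ t ≤ n - 1 + i) :
    |x| ≤ (m + i) / n + 1 := by
  have hq := Int.mul_ediv_self_le (x := m + i) hn.ne'
  have hq' := Int.lt_mul_ediv_self_add (x := m + i) hn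
  refine abs_le.2 ⟨?_, ?_⟩
  · by_contra! hx
    nlinarith
  · by_contra! hx
    nlinarith

lemma ncard_inter_cube_le_of_subset {n i : ℕ} (hn : 0 < n) {B C : Set (Fin d → ℤ)}
    (hC : C ⊆ ((n : ℤ) • ·) '' B + Icc (fun _ => -(i : ℤ)) (fun _ => (n : ℤ) - 1 + i)) (m : ℕ) :
    (C ∩ cube d m).ncard ≤ (B ∩ cube d ((m + i) / n + 1)).ncard * (n + 2 * i) ^ d := by
  set S := B ∩ cube d ((m + i) / n + 1)
  set T : Set (Fin d → ℤ) := Icc (fun _ => -(i : ℤ)) (fun _ => (n : ℤ) - 1 + i)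
  have hsub : C ∩ cube d m ⊆ ((n : ℤ) • ·) '' S + T := by
    rintro w ⟨hwC, hwm⟩
    obtain ⟨_, ⟨x, hx, rfl⟩, t, ht, rfl⟩ := hC hwC
    refine ⟨_, ⟨x, ⟨hx, mem_Icc_const.2 fun j => ?_⟩, rfl⟩, t, ht, rfl⟩
    have := abs_le_ediv_add_one_of_mul_add_mem (by exact_mod_cast hn)
      (mem_Icc_const.1 hwm j) (mem_Icc_const.1 ht j)
    push_cast [Int.natCast_div]
    exact abs_le.1 this
  have hS : S.Finite := (cube_finite _).inter_of_right B
  calc (C ∩ cube d m).ncard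
      ≤ (((n : ℤ) • ·) '' S + T).ncard := ncard_le_ncard hsub (hS.smul_set.add (finite_Icc _ _))
    _ ≤ (((n : ℤ) • ·) '' S).ncard * T.ncard := natCard_add_le
    _ ≤ S.ncard * T.ncard := Nat.mul_le_mul_right _ (ncard_image_le hS)
    _ = S.ncard * (n + 2 * i) ^ d := by rw [ncard_Icc_const]; congr; omega

lemma smul_add_injOn (n : ℕ) :
    InjOn (fun p : (Fin d → ℤ) × (Fin d → ℤ) => (n : ℤ) • p.1 + p.2)
      (univ ×ˢ Icc 0 (fun _ => (n : ℤ) - 1)) := by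
  rintro ⟨x, t⟩ ⟨-, ht⟩ ⟨x', t'⟩ ⟨-, ht'⟩ he
  have hcoord : ∀ j, x j = x' j ∧ t j = t' j := fun j => by
    have htj := (mem_Icc_const (lo := 0)).1 ht j
    have htj' := (mem_Icc_const (lo := 0)).1 ht' j
    have hn : (0 : ℤ) < n := by omega
    have h := (Int.ediv_emod_unique (q := x j) hn).2 ⟨add_comm _ _, htj.1, by omega⟩
    have h' := (Int.ediv_emod_unique (q := x' j) hn).2 ⟨add_comm _ _, htj'.1, by omega⟩
    have hej : (n : ℤ) * x j + t j = n * x' j + t' j := by simpa using congrFun he j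
    rw [hej] at h
    exact ⟨h.1.symm.trans h'.1, h.2.symm.trans h'.2⟩
  simp only [Prod.mk.injEq, funext_iff]
  exact ⟨fun j => (hcoord j).1, fun j => (hcoord j).2⟩

lemma ncard_inter_cube_mul_pow_le {n : ℕ} (hn : 0 < n) (B : Set (Fin d → ℤ)) (k : ℕ) :
    (B ∩ cube d k).ncard * n ^ d ≤
      ((((n : ℤ) • ·) '' B + Icc 0 (fun _ => (n : ℤ) - 1)) ∩ cube d (n * k + n - 1)).ncard := by
  set f := fun p : (Fin d → ℤ) × (Fin d → ℤ) => (n : ℤ) • p.1 + p.2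
  set P := (B ∩ cube d k) ×ˢ (Icc 0 (fun _ => (n : ℤ) - 1) : Set (Fin d → ℤ))
  have hmaps : f '' P ⊆
      (((n : ℤ) • ·) '' B + Icc 0 (fun _ => (n : ℤ) - 1)) ∩ cube d (n * k + n - 1) := by
    rintro _ ⟨⟨x, t⟩, ⟨⟨hxB, hxk⟩, ht⟩, rfl⟩
    refine ⟨⟨_, ⟨x, hxB, rfl⟩, t, ht, rfl⟩, mem_Icc_const.2 fun j => ?_⟩
    have hx := mem_Icc_const.1 hxk j
    have htj := (mem_Icc_const (lo := 0)).1 ht j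
    have hcast : ((n * k + n - 1 : ℕ) : ℤ) = n * k + n - 1 := by
      have : 1 ≤ n * k + n := by omega
      push_cast [Nat.cast_sub this]; ring
    simp only [f, Pi.add_apply, Pi.smul_apply, smul_eq_mul, hcast]
    constructor <;> nlinarith
  calc (B ∩ cube d k).ncard * n ^ d = P.ncard := by
        rw [ncard_prod, show (0 : Fin d → ℤ) = fun _ => 0 from rfl, ncard_Icc_const]; congr; omega
    _ = (f '' P).ncard :=
        ((smul_add_injOn n).mono (prod_mono (subset_univ _) le_rfl)).ncard_image.symm
    _ ≤ _ := ncard_le_ncard hmaps ((cube_finite _).inter_of_right _)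

end Counting

section Density

variable {d : ℕ}

/-- `upperDensity d A` is definitionally `limsup (densityAt d A) atTop`. -/
noncomputable def densityAt (d : ℕ) (A : Set (Fin d → ℤ)) (m : ℕ) : ℝ :=
  (A ∩ cube d m).ncard / (2 * (m : ℝ) + 1) ^ d

lemma densityAt_nonneg (A : Set (Fin d → ℤ)) (m : ℕ) : 0 ≤ densityAt d A m := by
  unfold densityAt; positivity

lemma densityAt_le_one (A : Set (Fin d → ℤ)) (m : ℕ) : densityAt d A m ≤ 1 := by
  rw [densityAt, div_le_one (by positivity)]
  have hcard : (A ∩ cube d m).ncard ≤ (2 * m + 1) ^ d := by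
    calc (A ∩ cube d m).ncard ≤ (cube d m).ncard :=
          ncard_le_ncard inter_subset_right (cube_finite m)
      _ = (2 * m + 1) ^ d := by rw [cube, ncard_Icc_const]; congr; omega
  exact_mod_cast hcard

lemma upperDensity_le_one (A : Set (Fin d → ℤ)) : upperDensity d A ≤ 1 :=
  limsup_le_of_le (isCoboundedUnder_le_of_le atTop (densityAt_nonneg A))
    (Eventually.of_forall (densityAt_le_one A))

lemma upperDensity_mono {A B : Set (Fin d → ℤ)} (h : A ⊆ B) :
    upperDensity d A ≤ upperDensity d B := by
  refine limsup_le_limsup (Eventually.of_forall fun m => ?_)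
    (isCoboundedUnder_le_of_le atTop (densityAt_nonneg A))
    (isBoundedUnder_of ⟨1, densityAt_le_one B⟩)
  have hcard : (A ∩ cube d m).ncard ≤ (B ∩ cube d m).ncard :=
    ncard_le_ncard (inter_subset_inter_left _ h) ((cube_finite m).inter_of_right _)
  show densityAt d A m ≤ densityAt d B m
  unfold densityAt
  gcongr

lemma upperDensity_le_of_ncard_inter_cube_le {B C : Set (Fin d → ℤ)} {φ : ℕ → ℕ} {K a b : ℝ}
    (hK : 0 ≤ K) (hφ : Tendsto φ atTop atTop)
    (hφa : ∀ m, 2 * (φ m : ℝ) + 1 ≤ a * (2 * m + 1) + b)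
    (hcount : ∀ m, ((C ∩ cube d m).ncard : ℝ) ≤ K * (B ∩ cube d (φ m)).ncard) :
    upperDensity d C ≤ K * a ^ d * upperDensity d B := by
  set g : ℕ → ℝ := fun m => a + b / (2 * m + 1)
  have hratio : ∀ m, (2 * (φ m : ℝ) + 1) / (2 * m + 1) ≤ g m := fun m => by
    rw [div_le_iff₀ (by positivity), add_mul, div_mul_cancel₀ _ (by positivity)]
    exact hφa m
  have hg : ∀ m, 0 ≤ g m := fun m => (by positivity : (0 : ℝ) ≤ _).trans (hratio m)
  have hlim : Tendsto (fun m => K * g m ^ d) atTop (nhds (K * a ^ d)) := by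
    have hb : Tendsto (fun m : ℕ => b / (2 * (m : ℝ) + 1)) atTop (nhds 0) :=
      tendsto_const_nhds.div_atTop
        (tendsto_atTop_add_const_right _ _ (tendsto_natCast_atTop_atTop.const_mul_atTop two_pos))
    simpa using ((tendsto_const_nhds.add hb).pow d).const_mul K
  refine limsup_le_mul_limsup_comp (densityAt_nonneg C) (densityAt_nonneg B) (densityAt_le_one B)
    (fun m => mul_nonneg hK (pow_nonneg (hg m) d)) hlim hφ fun m => ?_
  calc densityAt d C m ≤ K * (B ∩ cube d (φ m)).ncard / (2 * (m : ℝ) + 1) ^ d := by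
        unfold densityAt; gcongr; exact hcount m
    _ = K * ((2 * (φ m : ℝ) + 1) / (2 * m + 1)) ^ d * densityAt d B (φ m) := by
        unfold densityAt; rw [div_pow]; field_simp
    _ ≤ K * g m ^ d * densityAt d B (φ m) := by
        gcongr
        · exact densityAt_nonneg B _
        · exact hratio m

end Density

section Comparison

variable {d : ℕ}

lemma upperDensity_le_of_subset_image_smul_add {n i : ℕ} (hn : 0 < n) {B C : Set (Fin d → ℤ)}
    (hC : C ⊆ ((n : ℤ) • ·) '' B + Icc (fun _ => -(i : ℤ)) (fun _ => (n : ℤ) - 1 + i)) :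
    upperDensity d C ≤ (((n : ℝ) + 2 * i) / n) ^ d * upperDensity d B := by
  have hnR : (0 : ℝ) < n := by exact_mod_cast hn
  have hφ : Tendsto (fun m => (m + i) / n + 1) atTop atTop :=
    (tendsto_add_atTop_nat 1).comp
      ((Nat.tendsto_div_const_atTop hn.ne').comp (tendsto_add_atTop_nat i))
  have hφa : ∀ m : ℕ, 2 * (((m + i) / n + 1 : ℕ) : ℝ) + 1 ≤
      1 / n * (2 * m + 1) + (2 * i + 3 * n - 1) / n := fun m => by
    have hdiv : n * (2 * ((m + i) / n + 1) + 1) ≤ 2 * m + 2 * i + 3 * n := by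
      have := Nat.mul_div_le (m + i) n
      nlinarith
    rw [div_mul_eq_mul_div, one_mul, ← add_div, le_div_iff₀ hnR]
    have : ((n * (2 * ((m + i) / n + 1) + 1) : ℕ) : ℝ) ≤ ((2 * m + 2 * i + 3 * n : ℕ) : ℝ) := by
      exact_mod_cast hdiv
    push_cast at this ⊢
    linarith
  have hcount : ∀ m, ((C ∩ cube d m).ncard : ℝ) ≤
      ((n : ℝ) + 2 * i) ^ d * (B ∩ cube d ((m + i) / n + 1)).ncard := fun m => by
    rw [mul_comm]
    exact_mod_cast ncard_inter_cube_le_of_subset hn hC m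
  have h := upperDensity_le_of_ncard_inter_cube_le (by positivity) hφ hφa hcount
  rwa [← mul_pow, ← div_eq_mul_one_div] at h

lemma upperDensity_le_upperDensity_image_smul_add {n : ℕ} (hn : 0 < n) (B : Set (Fin d → ℤ)) :
    upperDensity d B ≤ upperDensity d (((n : ℤ) • ·) '' B + Icc 0 (fun _ => (n : ℤ) - 1)) := by
  have hφ : Tendsto (fun k => n * k + n - 1) atTop atTop :=
    tendsto_atTop_mono (fun k => show k ≤ n * k + n - 1 by
      have := Nat.le_mul_of_pos_left k hn; omega) tendsto_id
  have hφa : ∀ k : ℕ, 2 * ((n * k + n - 1 : ℕ) : ℝ) + 1 ≤ n * (2 * k + 1) + (n - 1) := fun k => by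
    rw [Nat.cast_sub (by nlinarith)]
    push_cast
    linarith
  have hcount : ∀ k, ((B ∩ cube d k).ncard : ℝ) ≤ ((n : ℝ) ^ d)⁻¹ *
      ((((n : ℤ) • ·) '' B + Icc 0 (fun _ => (n : ℤ) - 1)) ∩ cube d (n * k + n - 1)).ncard :=
    fun k => by
      rw [inv_mul_eq_div, le_div_iff₀ (by positivity)]
      exact_mod_cast ncard_inter_cube_mul_pow_le hn B k
  have h := upperDensity_le_of_ncard_inter_cube_le (by positivity) hφ hφa hcount
  rwa [inv_mul_cancel₀ (by positivity), one_mul] at h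

end Comparison

section BlockSets

variable {d : ℕ}

lemma superBlockSet_eq (A : Set (Fin d → ℤ)) (n : ℕ) :
    superBlockSet d A n = ((n : ℤ) • ·) '' blockSet d A n + Icc 0 (fun _ => (n : ℤ) - 1) := by
  ext w
  constructor
  · rintro ⟨x, hx, t, ht, rfl⟩
    exact ⟨_, ⟨x, hx, rfl⟩, t, ht, rfl⟩
  · rintro ⟨_, ⟨x, hx, rfl⟩, t, ht, rfl⟩
    exact ⟨x, hx, t, ht, rfl⟩

lemma superBlockSet_subset_add_cube (A : Set (Fin d → ℤ)) (n : ℕ) :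
    superBlockSet d A n ⊆ A + cube d (n - 1) := by
  rintro _ ⟨x, ⟨s, hs, hsA⟩, t, ht, rfl⟩
  refine ⟨(n : ℤ) • x + s, hsA, t - s, mem_Icc_const.2 fun j => ?_, add_add_sub_cancel _ _ _⟩
  have hsj := (mem_Icc_const (lo := 0)).1 hs j
  have htj := (mem_Icc_const (lo := 0)).1 ht j
  simp only [Pi.sub_apply]
  omega

lemma add_cube_subset_image_smul_blockSet_add {n : ℕ} (hn : 0 < n) (A : Set (Fin d → ℤ))
    (i : ℕ) :
    A + cube d i ⊆
      ((n : ℤ) • ·) '' blockSet d A n + Icc (fun _ => -(i : ℤ)) (fun _ => (n : ℤ) - 1 + i) := by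
  rintro _ ⟨a, ha, s, hs, rfl⟩
  have hnZ : (0 : ℤ) < n := by exact_mod_cast hn
  have hrem : ∀ j, 0 ≤ a j % n ∧ a j % n ≤ n - 1 := fun j =>
    ⟨Int.emod_nonneg _ hnZ.ne', by have := Int.emod_lt_of_pos (a j) hnZ; omega⟩
  have hdecomp : (n : ℤ) • (fun j => a j / n) + (fun j => a j % n) = a :=
    funext fun j => Int.mul_ediv_add_emod (a j) n
  refine ⟨_, ⟨fun j => a j / n, ⟨fun j => a j % n, mem_Icc_const.2 hrem, by rwa [hdecomp]⟩, rfl⟩,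
    (fun j => a j % n) + s, mem_Icc_const.2 fun j => ?_, ?_⟩
  · have := mem_Icc_const.1 hs j
    have := hrem j
    simp only [Pi.add_apply]
    omega
  · show (n : ℤ) • (fun j => a j / n) + ((fun j => a j % n) + s) = a + s
    rw [← add_assoc, hdecomp]

lemma upperDensity_blockSet_le_superBlockSet {n : ℕ} (hn : 0 < n) (A : Set (Fin d → ℤ)) :
    upperDensity d (blockSet d A n) ≤ upperDensity d (superBlockSet d A n) := by
  rw [superBlockSet_eq]
  exact upperDensity_le_upperDensity_image_smul_add hn _

lemma upperDensity_add_cube_le_blockSet {n : ℕ} (hn : 0 < n) (A : Set (Fin d → ℤ)) (i : ℕ) :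
    upperDensity d (A + cube d i) ≤
      (((n : ℝ) + 2 * i) / n) ^ d * upperDensity d (blockSet d A n) :=
  upperDensity_le_of_subset_image_smul_add hn (add_cube_subset_image_smul_blockSet_add hn A i)

end BlockSets

theorem stmt_13_general (d : ℕ) (A : Set (Fin d → ℤ)) :
    ∃ L : ℝ,
      Tendsto (fun i : ℕ => upperDensity d (blockSet d A i)) atTop (nhds L) ∧
      Tendsto (fun i : ℕ => upperDensity d (superBlockSet d A i)) atTop (nhds L) ∧
      Tendsto (fun i : ℕ => upperDensity d (A + cube d i)) atTop (nhds L) := by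
  set f := fun i : ℕ => upperDensity d (A + cube d i)
  have hf_bdd : BddAbove (range f) := ⟨1, by rintro _ ⟨i, rfl⟩; exact upperDensity_le_one _⟩
  have hf_lim : Tendsto f atTop (nhds (⨆ i, f i)) := tendsto_atTop_ciSup
    (fun i j hij => upperDensity_mono (add_subset_add_left (cube_mono hij))) hf_bdd
  have hsuper_le : ∀ n, upperDensity d (superBlockSet d A n) ≤ ⨆ i, f i := fun n =>
    (upperDensity_mono (superBlockSet_subset_add_cube A n)).trans (le_ciSup hf_bdd (n - 1))
  have hc := fun i : ℕ => tendsto_add_div_pow_nhds_one d (2 * i)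
  refine ⟨⨆ i, f i, tendsto_of_le_of_forall_le_mul hf_lim ?_ hc fun i => ?_,
    tendsto_of_le_of_forall_le_mul hf_lim (Eventually.of_forall hsuper_le) hc fun i => ?_, hf_lim⟩
  · filter_upwards [eventually_gt_atTop 0] with n hn
    exact (upperDensity_blockSet_le_superBlockSet hn A).trans (hsuper_le n)
  · filter_upwards [eventually_gt_atTop 0] with n hn
    exact upperDensity_add_cube_le_blockSet hn A i
  · filter_upwards [eventually_gt_atTop 0] with n hn
    exact (upperDensity_add_cube_le_blockSet hn A i).trans
      (by gcongr; exact upperDensity_blockSet_le_superBlockSet hn A)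

theorem stmt_13 (d : ℕ) (hd : 1 ≤ d) (A : Set (Fin d → ℤ)) :
    ∃ L : ℝ,
      Tendsto (fun i : ℕ => upperDensity d (blockSet d A i)) atTop (nhds L) ∧
      Tendsto (fun i : ℕ => upperDensity d (superBlockSet d A i)) atTop (nhds L) ∧
      Tendsto (fun i : ℕ => upperDensity d (A + cube d i)) atTop (nhds L) :=
  stmt_13_general d A
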